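/- Let p_max = max_j p_j and S = {j : p_j = p_max}. For any probability vector p, the limit of the majority-vote success probability exists and equals lim_{N→∞} Pr(a_1 | p; N) = 1/|S| if 1 ∈ S, and 0 otherwise. -/

import Mathlib

open Finset Filter

/-- Number of the `N` samples in `ω` equal to answer `j`. -/
def count {m N : ℕ} (ω : Fin N → Fin m) (j : Fin m) : ℕ :=
  (Finset.univ.filter fun i => ω i = j).card

/-- The set `J(ω)` of answers achieving the maximal count among the samples `ω`. -/
def maxSet {m N : ℕ} (ω : Fin N → Fin m) : Finset (Fin m) :=
  Finset.univ.filter fun j => ∀ k, count ω k ≤ count ω j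

/-- Majority-vote probability that answer `l` is returned after `N` i.i.d. samples
drawn from `p`: the most frequent answer is chosen, ties broken uniformly. -/
noncomputable def majorityProb {m : ℕ} (p : Fin m → ℝ) (N : ℕ) (l : Fin m) : ℝ :=
  ∑ ω : Fin N → Fin m, (∏ i, p (ω i)) *
    (if l ∈ maxSet ω then (1 : ℝ) / ((maxSet ω).card : ℝ) else 0)

/-! Answers tied for the largest probability are interchangeable, so they share the success
probability equally. An answer `l` with `p l < p j` wins with probability at most `r ^ N`, where
`r = ∑ₓ p x w x < 1` for the exponential tilt `w` that weighs `l` by `t ≥ 1` and `j` by `t⁻¹`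
(a Chernoff bound: on the event that `l` wins, `∏ᵢ w (ωᵢ) ≥ 1`). As the success probabilities
of all answers add up to `1`, the maximal answers share `1` in the limit. -/

section Basic

variable {m N : ℕ}

lemma maxSet_nonempty [Nonempty (Fin m)] (ω : Fin N → Fin m) : (maxSet ω).Nonempty := by
  obtain ⟨j, -, hj⟩ := Finset.exists_max_image Finset.univ (count ω) Finset.univ_nonempty
  exact ⟨j, by simpa [maxSet] using fun k => hj k (mem_univ k)⟩

lemma count_le_of_mem_maxSet {ω : Fin N → Fin m} {l : Fin m} (hl : l ∈ maxSet ω) (k : Fin m) :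
    count ω k ≤ count ω l := by
  simp only [maxSet, mem_filter, mem_univ, true_and] at hl
  exact hl k

lemma count_perm_comp (σ : Equiv.Perm (Fin m)) (ω : Fin N → Fin m) (k : Fin m) :
    count (σ ∘ ω) (σ k) = count ω k := by
  simp [count, σ.injective.eq_iff]

lemma maxSet_perm_comp (σ : Equiv.Perm (Fin m)) (ω : Fin N → Fin m) :
    maxSet (σ ∘ ω) = (maxSet ω).map σ.toEmbedding := by
  ext k
  obtain ⟨k, rfl⟩ := σ.surjective k
  simp only [maxSet, mem_map_equiv, mem_filter, mem_univ, true_and, Equiv.symm_apply_apply]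
  rw [← σ.forall_congr_right]
  simp only [count_perm_comp]

lemma majorityProb_nonneg {p : Fin m → ℝ} (hp : ∀ j, 0 ≤ p j) (N : ℕ) (l : Fin m) :
    0 ≤ majorityProb p N l :=
  sum_nonneg fun ω _ => mul_nonneg (prod_nonneg fun i _ => hp (ω i)) (by positivity)

lemma sum_majorityProb [Nonempty (Fin m)] {p : Fin m → ℝ} (hp : ∑ j, p j = 1) (N : ℕ) :
    ∑ l, majorityProb p N l = 1 := by
  have htie : ∀ ω : Fin N → Fin m,
      ∑ l, (if l ∈ maxSet ω then (1 : ℝ) / ((maxSet ω).card : ℝ) else 0) = 1 := fun ω => by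
    have hcard : ((maxSet ω).card : ℝ) ≠ 0 := by
      exact_mod_cast (maxSet_nonempty ω).card_pos.ne'
    rw [sum_ite_mem, univ_inter, sum_const, nsmul_eq_mul, mul_one_div, div_self hcard]
  simp only [majorityProb]
  rw [sum_comm]
  simp only [← mul_sum, htie, mul_one]
  rw [← Fintype.sum_pow, hp, one_pow]

end Basic

section Symmetry

variable {m : ℕ}

lemma majorityProb_perm_comp (p : Fin m → ℝ) (σ : Equiv.Perm (Fin m)) (N : ℕ) (l : Fin m) :
    majorityProb (p ∘ σ) N l = majorityProb p N (σ l) := by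
  refine Fintype.sum_equiv (Equiv.piCongrRight fun _ : Fin N => σ) _ _ fun ω => ?_
  have hω : (Equiv.piCongrRight fun _ : Fin N => σ) ω = σ ∘ ω := rfl
  simp only [hω, maxSet_perm_comp, card_map, mem_map_equiv, Equiv.symm_apply_apply]
  rfl

lemma majorityProb_eq_of_eq {p : Fin m → ℝ} {l l' : Fin m} (h : p l = p l') (N : ℕ) :
    majorityProb p N l = majorityProb p N l' := by
  have hswap : p ∘ Equiv.swap l l' = p := by
    ext x
    rcases eq_or_ne x l with rfl | hxl
    · simp [h]
    rcases eq_or_ne x l' with rfl | hxl'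
    · simp [h]
    · simp [Equiv.swap_apply_of_ne_of_ne hxl hxl']
  rw [← Equiv.swap_apply_left l l', ← majorityProb_perm_comp, hswap]

end Symmetry

section Tilting

variable {m N : ℕ}

lemma majorityProb_le_pow_of_one_le_prod {p w : Fin m → ℝ} (hp : ∀ j, 0 ≤ p j)
    (hw : ∀ j, 0 ≤ w j) {l : Fin m}
    (hwin : ∀ ω : Fin N → Fin m, l ∈ maxSet ω → 1 ≤ ∏ i, w (ω i)) :
    majorityProb p N l ≤ (∑ x, p x * w x) ^ N := by
  rw [Fintype.sum_pow, majorityProb]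
  refine sum_le_sum fun ω _ => ?_
  rw [prod_mul_distrib]
  refine mul_le_mul_of_nonneg_left ?_ (prod_nonneg fun i _ => hp (ω i))
  split_ifs with hl
  · have hcard : (1 : ℝ) ≤ (maxSet ω).card := by exact_mod_cast card_pos.mpr ⟨l, hl⟩
    exact (div_le_one_of_le₀ hcard (Nat.cast_nonneg _)).trans (hwin ω hl)
  · exact prod_nonneg fun i _ => hw (ω i)

noncomputable def tilt (l j : Fin m) (t : ℝ) (x : Fin m) : ℝ :=
  (if x = l then t else 1) * (if x = j then t⁻¹ else 1)

lemma prod_tilt (l j : Fin m) (t : ℝ) (ω : Fin N → Fin m) :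
    ∏ i, tilt l j t (ω i) = t ^ count ω l * t⁻¹ ^ count ω j := by
  simp only [tilt, prod_mul_distrib, ← prod_filter, prod_const, count]

lemma one_le_prod_tilt {l j : Fin m} {t : ℝ} (ht : 1 ≤ t) {ω : Fin N → Fin m}
    (hl : l ∈ maxSet ω) : 1 ≤ ∏ i, tilt l j t (ω i) := by
  have hpow : t ^ count ω j ≤ t ^ count ω l :=
    pow_le_pow_right₀ ht (count_le_of_mem_maxSet hl j)
  rw [prod_tilt, inv_pow, ← div_eq_mul_inv]
  exact (one_le_div (by positivity)).mpr hpow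

lemma sum_mul_tilt {p : Fin m → ℝ} (hp : ∑ x, p x = 1) {l j : Fin m} (hlj : l ≠ j) (t : ℝ) :
    ∑ x, p x * tilt l j t x = 1 + p l * (t - 1) + p j * (t⁻¹ - 1) := by
  have hx : ∀ x, p x * tilt l j t x = p x + (if x = l then p l * (t - 1) else 0)
      + (if x = j then p j * (t⁻¹ - 1) else 0) := fun x => by
    unfold tilt
    by_cases hxl : x = l
    · subst hxl; simp [hlj]; ring
    by_cases hxj : x = j
    · subst hxj; simp [hxl]; ring
    · simp [hxl, hxj]
  simp only [hx, sum_add_distrib, sum_ite_eq', mem_univ, if_true, hp]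

/-- The choice `t = 2b / (a + b)` makes the tilted mass `1 - (b - a)² / (2 (a + b))`. -/
lemma exists_tilt_decrease {a b : ℝ} (ha : 0 ≤ a) (hab : a < b) :
    ∃ t : ℝ, 1 ≤ t ∧ a * (t - 1) + b * (t⁻¹ - 1) < 0 := by
  have hb : 0 < b := ha.trans_lt hab
  refine ⟨2 * b / (a + b), (one_le_div (by linarith)).mpr (by linarith), ?_⟩
  rw [inv_div]
  field_simp
  nlinarith

lemma majorityProb_tendsto_zero {p : Fin m → ℝ} (hp : ∀ j, 0 ≤ p j) (hsum : ∑ j, p j = 1)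
    {l j : Fin m} (hlj : p l < p j) :
    Tendsto (fun N => majorityProb p N l) atTop (nhds 0) := by
  obtain ⟨t, ht, hdec⟩ := exists_tilt_decrease (hp l) hlj
  have hw : ∀ x, 0 ≤ tilt l j t x := fun x => by
    unfold tilt
    have : 0 ≤ t := zero_le_one.trans ht
    positivity
  have hr0 : 0 ≤ ∑ x, p x * tilt l j t x := sum_nonneg fun x _ => mul_nonneg (hp x) (hw x)
  have hr1 : ∑ x, p x * tilt l j t x < 1 := by
    rw [sum_mul_tilt hsum (fun h => hlj.ne (congrArg p h)) t]
    linarith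
  exact squeeze_zero (majorityProb_nonneg hp · l)
    (fun N => majorityProb_le_pow_of_one_le_prod hp hw fun _ => one_le_prod_tilt ht)
    (tendsto_pow_atTop_nhds_zero_of_lt_one hr0 hr1)

end Tilting

lemma tendsto_sum_majorityProb_argmax {m : ℕ} [Nonempty (Fin m)] {p : Fin m → ℝ}
    (hp : ∀ j, 0 ≤ p j) (hsum : ∑ j, p j = 1) :
    Tendsto (fun N => ∑ l ∈ univ.filter fun j => ∀ k, p k ≤ p j, majorityProb p N l)
      atTop (nhds 1) := by
  set S := univ.filter fun j => ∀ k, p k ≤ p j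
  have hrest : Tendsto (fun N => ∑ l ∈ Sᶜ, majorityProb p N l) atTop (nhds 0) := by
    rw [← sum_const_zero (s := Sᶜ)]
    refine tendsto_finsetSum _ fun l hl => ?_
    obtain ⟨j, hj⟩ : ∃ j, p l < p j := by simpa [S] using hl
    exact majorityProb_tendsto_zero hp hsum hj
  have hsplit : ∀ N, ∑ l ∈ S, majorityProb p N l = 1 - ∑ l ∈ Sᶜ, majorityProb p N l :=
    fun N => eq_sub_of_add_eq (by rw [sum_add_sum_compl, sum_majorityProb hsum])
  simpa [hsplit] using (tendsto_const_nhds (x := (1 : ℝ))).sub hrest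

/-- The limit of the majority-vote success probability always exists and
equals `1/|S|` if `a₁ ∈ S = {j : p j = p_max}`, and `0` otherwise. -/
theorem majorityProb_tendsto_limit {m : ℕ} (hm : 0 < m) (p : Fin m → ℝ)
    (hnn : ∀ j, 0 ≤ p j) (hsum : ∑ j, p j = 1)
    (S : Finset (Fin m)) (hS : S = Finset.univ.filter fun j => ∀ k, p k ≤ p j) :
    Tendsto (fun N => majorityProb p N ⟨0, hm⟩) atTop
      (nhds (if (⟨0, hm⟩ : Fin m) ∈ S then 1 / (S.card : ℝ) else 0)) := by
  have : Nonempty (Fin m) := ⟨⟨0, hm⟩⟩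
  split_ifs with h0
  · have hmax : ∀ l ∈ S, p l = p ⟨0, hm⟩ := fun l hl => by
      subst hS
      simp only [mem_filter, mem_univ, true_and] at hl h0
      exact le_antisymm (h0 l) (hl _)
    have hshare : ∀ N, majorityProb p N ⟨0, hm⟩ = (∑ l ∈ S, majorityProb p N l) / S.card :=
      fun N => by
        have hS0 : (S.card : ℝ) ≠ 0 := by exact_mod_cast (card_pos.mpr ⟨_, h0⟩).ne'
        rw [sum_congr rfl fun l hl => majorityProb_eq_of_eq (hmax l hl) N, sum_const,
          nsmul_eq_mul, mul_div_cancel_left₀ _ hS0]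
    simp only [hshare]
    subst hS
    exact (tendsto_sum_majorityProb_argmax hnn hsum).div_const _
  · obtain ⟨j, hj⟩ : ∃ j, p ⟨0, hm⟩ < p j := by simpa [hS] using h0
    exact majorityProb_tendsto_zero hnn hsum hj
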